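/- arXiv:1403.6550 — 2 statements merged into one kernel-verified Lean document; each statement's English description precedes it below -/
import Mathlib

section
/- Assume the Regularity hypothesis. Fix a real number s with 0 < s < d and a constant γ > 0. Then there exist constants C > 0 and D0 ∈ (0, 1), depending only on d, s, γ, C_bot, C_top and diam(M), with the following property: for every nonempty finite subset X ⊆ M with N := |X| whose distinct points satisfy dist(x, y) > γ N^{−1/d}, and for every D with 1/N < D ≤ D0, γ D^{1/d} < diam(M) and D(X) ≤ D, one has |E_X − (1/N) Σ_{x ∈ X} U(x)| ≤ C · D^{1−s/d}. -/
/-!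
For a finite measure `μ` with no atom at `x`, Tonelli's theorem gives the layer-cake formula
`∫ dist(x, y)^(-s) dμ(y) = ∫₀^∞ s r^(-s-1) μ(B(x, r)) dr`. Apply it to `σ` and to the
normalized counting measure of `X \ {x}`. Their ball functions differ by at most `2D`
(discrepancy plus the removed atom, `1/N < D`), and both are `O(r^d)`: for `σ` by regularity,
for the point set by packing the disjoint balls of radius `δ/2` around its `δ`-separated points,
`δ = γ N^(-1/d)`, each of `σ`-measure at least `C_bot (δ/2)^d ≍ 1/N`. Splitting the `r`-integral
at `R = γ D^(1/d)` bounds the difference of the two potentials at `x` by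
`R^(d-s) + D R^(-s) ≍ D^(1-s/d)`, and averaging over `x ∈ X` gives the claim.
-/

open MeasureTheory Metric Filter

/-- Normalized ball discrepancy of a finite point set `X` with respect to `σ`. -/
noncomputable def ballDisc {M : Type*} [MetricSpace M] [MeasurableSpace M]
    (σ : Measure M) (X : Finset M) : ℝ :=
  ⨆ y : M, ⨆ r : Set.Ioi (0 : ℝ),
    |(((X : Set M) ∩ ball y (r : ℝ)).ncard : ℝ) / X.card - (σ (ball y (r : ℝ))).toReal|

/-- Normalized Riesz `s`-energy of a finite point set. -/
noncomputable def rieszEnergy {M : Type*} [MetricSpace M] (s : ℝ) (X : Finset M) : ℝ :=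
  letI := Classical.decEq M
  (1 / (X.card : ℝ) ^ 2) * ∑ x ∈ X, ∑ y ∈ X.erase x, dist x y ^ (-s)

open Set
open scoped ENNReal NNReal Topology

section Kernel

variable {s : ℝ}

lemma integral_Ioi_mul_rpow_neg_sub_one (hs : 0 < s) {a : ℝ} (ha : 0 < a) :
    ∫ r in Ioi a, s * r ^ (-s - 1) = a ^ (-s) := by
  rw [integral_const_mul, integral_Ioi_rpow_of_lt (by linarith) ha, sub_add_cancel]
  field_simp

lemma integrableOn_Ioi_mul_rpow_neg_sub_one (hs : 0 < s) {a : ℝ} (ha : 0 < a) :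
    IntegrableOn (fun r ↦ s * r ^ (-s - 1)) (Ioi a) :=
  (integrableOn_Ioi_rpow_of_lt (by linarith) ha).const_mul s

lemma lintegral_Ioi_ofReal_mul_rpow_neg_sub_one (hs : 0 < s) {a : ℝ} (ha : 0 < a) :
    ∫⁻ r in Ioi a, ENNReal.ofReal (s * r ^ (-s - 1)) = ENNReal.ofReal (a ^ (-s)) := by
  rw [← integral_Ioi_mul_rpow_neg_sub_one hs ha, ofReal_integral_eq_lintegral_ofReal
    (integrableOn_Ioi_mul_rpow_neg_sub_one hs ha)]
  filter_upwards [ae_restrict_mem measurableSet_Ioi] with r (hr : a < r)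
  have : 0 < r := ha.trans hr
  positivity

lemma integrableOn_Ioc_zero_const_mul_rpow {t : ℝ} (ht : -1 < t) (c : ℝ) {R : ℝ} (hR : 0 ≤ R) :
    IntegrableOn (fun r ↦ c * r ^ t) (Ioc 0 R) := by
  rw [← intervalIntegrable_iff_integrableOn_Ioc_of_le hR]
  exact (intervalIntegral.intervalIntegrable_rpow' ht).const_mul c

variable {d a K : ℝ}

lemma mul_rpow_neg_sub_one_mul_min_le_left {r : ℝ} (hs : 0 < s) (hr : 0 < r) :
    s * r ^ (-s - 1) * min a (K * r ^ d) ≤ K * s * r ^ (d - s - 1) := by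
  calc s * r ^ (-s - 1) * min a (K * r ^ d) ≤ s * r ^ (-s - 1) * (K * r ^ d) := by
        gcongr; exact min_le_right _ _
    _ = K * s * (r ^ (-s - 1) * r ^ d) := by ring
    _ = K * s * r ^ (d - s - 1) := by rw [← Real.rpow_add hr]; ring_nf

lemma mul_rpow_neg_sub_one_mul_min_le_right {r : ℝ} (hs : 0 < s) (hr : 0 < r) :
    s * r ^ (-s - 1) * min a (K * r ^ d) ≤ a * (s * r ^ (-s - 1)) := by
  rw [mul_comm a]; gcongr; exact min_le_left _ _

lemma integrableOn_mul_rpow_neg_sub_one_mul_min (hs : 0 < s) (hsd : s < d) (ha : 0 ≤ a)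
    (hK : 0 ≤ K) : IntegrableOn (fun r ↦ s * r ^ (-s - 1) * min a (K * r ^ d)) (Ioi 0) := by
  have hmeas : AEStronglyMeasurable (fun r : ℝ ↦ s * r ^ (-s - 1) * min a (K * r ^ d)) :=
    (by fun_prop : Measurable _).aestronglyMeasurable
  have hnonneg : ∀ r : ℝ, 0 < r → 0 ≤ s * r ^ (-s - 1) * min a (K * r ^ d) := fun r hr ↦ by
    have : 0 ≤ min a (K * r ^ d) := le_min ha (by positivity)
    positivity
  rw [← Ioc_union_Ioi_eq_Ioi zero_le_one]
  refine IntegrableOn.union ?_ ?_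
  · refine (integrableOn_Ioc_zero_const_mul_rpow (t := d - s - 1) (by linarith) (K * s)
      zero_le_one).mono' hmeas.restrict ?_
    filter_upwards [ae_restrict_mem measurableSet_Ioc] with r hr
    rw [Real.norm_of_nonneg (hnonneg r hr.1)]
    exact mul_rpow_neg_sub_one_mul_min_le_left hs hr.1
  · refine ((integrableOn_Ioi_mul_rpow_neg_sub_one hs one_pos).const_mul a).mono'
      hmeas.restrict ?_
    filter_upwards [ae_restrict_mem measurableSet_Ioi] with r (hr : 1 < r)
    rw [Real.norm_of_nonneg (hnonneg r (one_pos.trans hr))]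
    exact mul_rpow_neg_sub_one_mul_min_le_right hs (one_pos.trans hr)

lemma integral_mul_rpow_neg_sub_one_mul_min_le (hs : 0 < s) (hsd : s < d) (ha : 0 ≤ a)
    (hK : 0 ≤ K) {R : ℝ} (hR : 0 < R) :
    ∫ r in Ioi 0, s * r ^ (-s - 1) * min a (K * r ^ d) ≤
      K * (s / (d - s)) * R ^ (d - s) + a * R ^ (-s) := by
  have hf := integrableOn_mul_rpow_neg_sub_one_mul_min hs hsd ha hK
  have hIoc : Ioc 0 R ⊆ Ioi 0 := Ioc_subset_Ioi_self
  have hIoi : Ioi R ⊆ Ioi 0 := Ioi_subset_Ioi hR.le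
  rw [← Ioc_union_Ioi_eq_Ioi hR.le, setIntegral_union (Ioc_disjoint_Ioi le_rfl)
    measurableSet_Ioi (hf.mono_set hIoc) (hf.mono_set hIoi)]
  gcongr
  · calc ∫ r in Ioc 0 R, s * r ^ (-s - 1) * min a (K * r ^ d)
        ≤ ∫ r in Ioc 0 R, K * s * r ^ (d - s - 1) :=
          setIntegral_mono_on (hf.mono_set hIoc)
            (integrableOn_Ioc_zero_const_mul_rpow (by linarith) _ hR.le) measurableSet_Ioc
            fun r hr ↦ mul_rpow_neg_sub_one_mul_min_le_left hs hr.1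
      _ = K * (s / (d - s)) * R ^ (d - s) := by
          rw [integral_const_mul, ← intervalIntegral.integral_of_le hR.le,
            integral_rpow (Or.inl (by linarith)), sub_add_cancel,
            Real.zero_rpow (by linarith)]
          ring
  · calc ∫ r in Ioi R, s * r ^ (-s - 1) * min a (K * r ^ d)
        ≤ ∫ r in Ioi R, a * (s * r ^ (-s - 1)) :=
          setIntegral_mono_on (hf.mono_set hIoi)
            ((integrableOn_Ioi_mul_rpow_neg_sub_one hs hR).const_mul a) measurableSet_Ioi
            fun r hr ↦ mul_rpow_neg_sub_one_mul_min_le_right hs (hR.trans hr)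
      _ = a * R ^ (-s) := by rw [integral_const_mul, integral_Ioi_mul_rpow_neg_sub_one hs hR]

end Kernel

section LayerCake

variable {M : Type*} [MetricSpace M] [MeasurableSpace M] [OpensMeasurableSpace M]
  {s : ℝ} {x : M}

lemma lintegral_ofReal_rpow_neg_dist (μ : Measure M) [SFinite μ] (hs : 0 < s)
    (hx : μ {x} = 0) :
    ∫⁻ y, ENNReal.ofReal (dist x y ^ (-s)) ∂μ =
      ∫⁻ r in Ioi 0, ENNReal.ofReal (s * r ^ (-s - 1)) * μ (ball x r) := by
  set c : ℝ → ℝ≥0∞ := fun r ↦ ENNReal.ofReal (s * r ^ (-s - 1))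
  set g : ℝ → M → ℝ≥0∞ := fun r y ↦ (ball x r).indicator (fun _ ↦ c r) y
  have hg : Measurable (Function.uncurry g) := by
    change Measurable fun p : ℝ × M ↦ if dist p.2 x < p.1 then c p.1 else 0
    exact Measurable.ite (measurableSet_lt (by fun_prop) (by fun_prop)) (by fun_prop)
      measurable_const
  have hslice : ∀ y, x ≠ y → ∫⁻ r in Ioi 0, g r y = ENNReal.ofReal (dist x y ^ (-s)) := by
    intro y hxy
    have hpos : 0 < dist x y := dist_pos.2 hxy
    have : ∀ r, g r y = (Ioi (dist x y)).indicator c r := fun r ↦ by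
      simp only [g]
      by_cases h : dist x y < r
      · rw [indicator_of_mem (by rwa [mem_ball, dist_comm]), indicator_of_mem (mem_Ioi.2 h)]
      · rw [indicator_of_notMem (by rwa [mem_ball, dist_comm]),
          indicator_of_notMem (mt mem_Ioi.1 h)]
    simp_rw [this]
    rw [lintegral_indicator measurableSet_Ioi, Measure.restrict_restrict measurableSet_Ioi,
      inter_eq_self_of_subset_left (Ioi_subset_Ioi hpos.le),
      lintegral_Ioi_ofReal_mul_rpow_neg_sub_one hs hpos]
  have hae : ∀ᵐ y ∂μ, x ≠ y := by
    rw [ae_iff]; simpa [eq_comm] using hx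
  calc ∫⁻ y, ENNReal.ofReal (dist x y ^ (-s)) ∂μ = ∫⁻ y, (∫⁻ r in Ioi 0, g r y) ∂μ :=
        lintegral_congr_ae (hae.mono fun y hy ↦ (hslice y hy).symm)
    _ = ∫⁻ r in Ioi 0, ∫⁻ y, g r y ∂μ := (lintegral_lintegral_swap hg.aemeasurable).symm
    _ = ∫⁻ r in Ioi 0, c r * μ (ball x r) := by
        simp only [g, lintegral_indicator_const measurableSet_ball]

omit [OpensMeasurableSpace M] in
lemma measurable_measureReal_ball (μ : Measure M) (x : M) :
    Measurable fun r : ℝ ↦ μ.real (ball x r) :=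
  (show Monotone fun r ↦ μ (ball x r) from fun _ _ h ↦ measure_mono (ball_subset_ball h))
    |>.measurable.ennreal_toReal

lemma integral_rpow_neg_dist (μ : Measure M) [IsFiniteMeasure μ] (hs : 0 < s)
    (hx : μ {x} = 0) :
    ∫ y, dist x y ^ (-s) ∂μ = ∫ r in Ioi 0, s * r ^ (-s - 1) * μ.real (ball x r) := by
  rw [integral_eq_lintegral_of_nonneg_ae (.of_forall fun y ↦ by positivity)
    (by fun_prop : Measurable fun y ↦ dist x y ^ (-s)).aestronglyMeasurable,
    integral_eq_lintegral_of_nonneg_ae ?_ ?_, lintegral_ofReal_rpow_neg_dist μ hs hx]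
  · congr 1
    refine setLIntegral_congr_fun measurableSet_Ioi fun r hr ↦ ?_
    have : 0 < r := hr
    rw [ENNReal.ofReal_mul (by positivity : 0 ≤ s * r ^ (-s - 1)), ofReal_measureReal]
  · filter_upwards [ae_restrict_mem measurableSet_Ioi] with r (hr : 0 < r)
    positivity
  · exact ((by fun_prop : Measurable fun r : ℝ ↦ s * r ^ (-s - 1)).mul
      (measurable_measureReal_ball μ x)).aestronglyMeasurable

variable {d K : ℝ}

omit [OpensMeasurableSpace M] in
lemma integrableOn_mul_rpow_neg_sub_one_mul_measureReal_ball (μ : Measure M)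
    [IsFiniteMeasure μ] (hs : 0 < s) (hsd : s < d) (hK : 0 ≤ K)
    (hμ : ∀ r, 0 < r → μ.real (ball x r) ≤ K * r ^ d) :
    IntegrableOn (fun r ↦ s * r ^ (-s - 1) * μ.real (ball x r)) (Ioi 0) := by
  refine (integrableOn_mul_rpow_neg_sub_one_mul_min hs hsd measureReal_nonneg hK
    (a := μ.real univ)).mono' ?_ ?_
  · exact ((by fun_prop : Measurable fun r : ℝ ↦ s * r ^ (-s - 1)).mul
      (measurable_measureReal_ball μ x)).aestronglyMeasurable
  filter_upwards [ae_restrict_mem measurableSet_Ioi] with r (hr : 0 < r)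
  rw [Real.norm_of_nonneg (by positivity)]
  gcongr
  exact le_min (measureReal_mono (subset_univ _)) (hμ r hr)

lemma abs_integral_rpow_neg_dist_sub_le {μ ν : Measure M} [IsFiniteMeasure μ]
    [IsFiniteMeasure ν] {a R : ℝ} (hs : 0 < s) (hsd : s < d) (hK : 0 ≤ K) (hR : 0 < R)
    (hμx : μ {x} = 0) (hνx : ν {x} = 0)
    (hμ : ∀ r, 0 < r → μ.real (ball x r) ≤ K * r ^ d)
    (hν : ∀ r, 0 < r → ν.real (ball x r) ≤ K * r ^ d)
    (hμν : ∀ r, 0 < r → |μ.real (ball x r) - ν.real (ball x r)| ≤ a) :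
    |∫ y, dist x y ^ (-s) ∂μ - ∫ y, dist x y ^ (-s) ∂ν| ≤
      K * (s / (d - s)) * R ^ (d - s) + a * R ^ (-s) := by
  have ha : 0 ≤ a := (abs_nonneg _).trans (hμν 1 one_pos)
  have hdiff : ∀ r ∈ Ioi (0 : ℝ), |s * r ^ (-s - 1) * μ.real (ball x r) -
      s * r ^ (-s - 1) * ν.real (ball x r)| ≤ s * r ^ (-s - 1) * min a (K * r ^ d) := by
    intro r (hr : 0 < r)
    rw [← mul_sub, abs_mul, abs_of_nonneg (by positivity)]
    gcongr
    refine le_min (hμν r hr) (abs_sub_le_iff.2 ⟨?_, ?_⟩) <;>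
      linarith [hμ r hr, hν r hr, measureReal_nonneg (μ := μ) (s := ball x r),
        measureReal_nonneg (μ := ν) (s := ball x r)]
  rw [integral_rpow_neg_dist μ hs hμx, integral_rpow_neg_dist ν hs hνx,
    ← integral_sub (integrableOn_mul_rpow_neg_sub_one_mul_measureReal_ball μ hs hsd hK hμ)
      (integrableOn_mul_rpow_neg_sub_one_mul_measureReal_ball ν hs hsd hK hν)]
  calc _ ≤ ∫ r in Ioi 0, |s * r ^ (-s - 1) * μ.real (ball x r) -
        s * r ^ (-s - 1) * ν.real (ball x r)| := abs_integral_le_integral_abs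
    _ ≤ ∫ r in Ioi 0, s * r ^ (-s - 1) * min a (K * r ^ d) :=
        setIntegral_mono_on ((integrableOn_mul_rpow_neg_sub_one_mul_measureReal_ball μ hs hsd
          hK hμ).sub (integrableOn_mul_rpow_neg_sub_one_mul_measureReal_ball ν hs hsd hK hν)).abs
          (integrableOn_mul_rpow_neg_sub_one_mul_min hs hsd ha hK) measurableSet_Ioi hdiff
    _ ≤ _ := integral_mul_rpow_neg_sub_one_mul_min_le hs hsd ha hK hR

end LayerCake

section Packing

variable {M : Type*} [MetricSpace M] [MeasurableSpace M] [OpensMeasurableSpace M]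

lemma card_mul_le_measureReal_ball_of_pairwise_le_dist (σ : Measure M) [IsFiniteMeasure σ]
    {T : Finset M} {x : M} {δ m r : ℝ} (hsep : (T : Set M).Pairwise (δ ≤ dist · ·))
    (hT : ∀ y ∈ T, y ∈ ball x r) (hm : ∀ y ∈ T, m ≤ σ.real (ball y (δ / 2))) :
    T.card * m ≤ σ.real (ball x (r + δ / 2)) := by
  have hdisj : (T : Set M).PairwiseDisjoint fun y ↦ ball y (δ / 2) :=
    hsep.mono' fun y z h ↦ ball_disjoint_ball (by linarith)
  have hsub : ⋃ y ∈ T, ball y (δ / 2) ⊆ ball x (r + δ / 2) := by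
    refine iUnion₂_subset fun y hy z hz ↦ ?_
    rw [mem_ball] at hz ⊢
    linarith [dist_triangle z y x, mem_ball.1 (hT y hy)]
  calc T.card * m = ∑ _y ∈ T, m := by rw [Finset.sum_const, nsmul_eq_mul]
    _ ≤ ∑ y ∈ T, σ.real (ball y (δ / 2)) := Finset.sum_le_sum hm
    _ = σ.real (⋃ y ∈ T, ball y (δ / 2)) :=
        (measureReal_biUnion_finset hdisj fun _ _ ↦ measurableSet_ball).symm
    _ ≤ σ.real (ball x (r + δ / 2)) := measureReal_mono hsub

variable (σ : Measure M) [IsFiniteMeasure σ] {d : ℕ} {Cbot Ct : ℝ}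

lemma ncard_inter_ball_le_of_separated (hCbot : 0 < Cbot) (hCt : 0 ≤ Ct)
    (hlow : ∀ y ρ, 0 < ρ → ρ ≤ diam (univ : Set M) → Cbot * ρ ^ d ≤ σ.real (ball y ρ))
    (hup : ∀ y ρ, 0 < ρ → σ.real (ball y ρ) ≤ Ct * ρ ^ d)
    {T : Finset M} {x : M} {δ r : ℝ} (hδ : 0 < δ) (hδM : δ ≤ diam (univ : Set M))
    (hsep : (T : Set M).Pairwise (δ < dist · ·)) (hx : ∀ y ∈ T, δ < dist x y) (hr : 0 < r) :
    (((T : Set M) ∩ ball x r).ncard : ℝ) ≤ Ct / Cbot * (3 * r / δ) ^ d := by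
  classical
  rcases le_or_gt r δ with hrδ | hδr
  · have hempty : (T : Set M) ∩ ball x r = ∅ :=
      eq_empty_of_forall_notMem fun y ⟨hyT, hy⟩ ↦
        (mem_ball'.1 hy).not_ge (hrδ.trans (hx y hyT).le)
    rw [hempty, ncard_empty, Nat.cast_zero]
    positivity
  set T' := T.filter (· ∈ ball x r)
  have hT' : ((T : Set M) ∩ ball x r).ncard = T'.card := by
    rw [← ncard_coe_finset, Finset.coe_filter]; rfl
  have hpack := card_mul_le_measureReal_ball_of_pairwise_le_dist σ (T := T') (x := x) (r := r)
    ((hsep.mono (Finset.coe_subset.2 (Finset.filter_subset _ _))).imp fun _ _ h ↦ h.le)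
    (fun y hy ↦ (Finset.mem_filter.1 hy).2) fun y _ ↦ hlow y (δ / 2) (by linarith) (by linarith)
  have hpos : 0 < Cbot * (δ / 2) ^ d := by positivity
  have hkey : Ct / Cbot * (3 * r / δ) ^ d * (Cbot * (δ / 2) ^ d) = Ct * (3 * r / 2) ^ d := by
    simp only [div_pow, mul_pow]
    field_simp
  rw [hT']
  refine le_of_mul_le_mul_right ?_ hpos
  calc T'.card * (Cbot * (δ / 2) ^ d) ≤ σ.real (ball x (r + δ / 2)) := hpack
    _ ≤ Ct * (r + δ / 2) ^ d := hup x _ (by positivity)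
    _ ≤ Ct * (3 * r / 2) ^ d := by gcongr; linarith
    _ = _ := hkey.symm

end Packing

lemma measure_singleton_eq_zero_of_measureReal_ball_le {M : Type*} [MetricSpace M]
    [MeasurableSpace M] {μ : Measure M} [IsFiniteMeasure μ] {x : M} {d : ℕ} {C : ℝ}
    (hd : d ≠ 0) (h : ∀ ρ, 0 < ρ → μ.real (ball x ρ) ≤ C * ρ ^ d) : μ {x} = 0 := by
  have hlim : Tendsto (fun ρ : ℝ ↦ C * ρ ^ d) (𝓝[>] 0) (𝓝 0) := by
    have := ((continuous_const.mul (continuous_pow d)).tendsto' (0 : ℝ) 0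
      (by simp [zero_pow hd] : C * (0 : ℝ) ^ d = 0))
    exact this.mono_left nhdsWithin_le_nhds
  have : μ.real {x} ≤ 0 := ge_of_tendsto hlim <| eventually_nhdsWithin_of_forall fun ρ hρ ↦
    (measureReal_mono (singleton_subset_iff.2 (mem_ball_self hρ))).trans (h ρ hρ)
  exact (measureReal_eq_zero_iff).1 (le_antisymm this measureReal_nonneg)

lemma measureReal_ball_le_max_mul {M : Type*} [MetricSpace M] [MeasurableSpace M]
    {σ : Measure M} [IsProbabilityMeasure σ] {d : ℕ} {Ctop : ℝ}
    (hM : 0 < diam (univ : Set M))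
    (hup : ∀ y ρ, 0 < ρ → ρ ≤ diam (univ : Set M) → σ.real (ball y ρ) ≤ Ctop * ρ ^ d)
    (y : M) {ρ : ℝ} (hρ : 0 < ρ) :
    σ.real (ball y ρ) ≤ max Ctop (diam (univ : Set M) ^ d)⁻¹ * ρ ^ d := by
  rcases le_or_gt ρ (diam (univ : Set M)) with hρM | hMρ
  · exact (hup y ρ hρ hρM).trans (by gcongr; exact le_max_left _ _)
  calc σ.real (ball y ρ) ≤ 1 := measureReal_le_one
    _ = (diam (univ : Set M) ^ d)⁻¹ * diam (univ : Set M) ^ d := by field_simp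
    _ ≤ max Ctop (diam (univ : Set M) ^ d)⁻¹ * ρ ^ d := by
        gcongr
        exact le_max_right _ _

lemma abs_sub_le_ballDisc {M : Type*} [MetricSpace M] [MeasurableSpace M]
    (σ : Measure M) [IsProbabilityMeasure σ] (X : Finset M) (y : M) {r : ℝ} (hr : 0 < r) :
    |(((X : Set M) ∩ ball y r).ncard : ℝ) / X.card - σ.real (ball y r)| ≤ ballDisc σ X := by
  have hle_one : ∀ (z : M) (ρ : ℝ),
      |(((X : Set M) ∩ ball z ρ).ncard : ℝ) / X.card - σ.real (ball z ρ)| ≤ 1 := by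
    intro z ρ
    have hcard : (((X : Set M) ∩ ball z ρ).ncard : ℝ) ≤ X.card := by
      rw [← ncard_coe_finset]
      exact_mod_cast ncard_le_ncard inter_subset_left X.finite_toSet
    have : (((X : Set M) ∩ ball z ρ).ncard : ℝ) / X.card ≤ 1 :=
      div_le_one_of_le₀ hcard (by positivity)
    rw [abs_le]
    constructor <;> linarith [measureReal_nonneg (μ := σ) (s := ball z ρ),
      measureReal_le_one (μ := σ) (s := ball z ρ),
      (by positivity : (0 : ℝ) ≤ (((X : Set M) ∩ ball z ρ).ncard : ℝ) / X.card)]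
  refine le_ciSup_of_le ⟨1, forall_mem_range.2 fun z ↦ ciSup_le fun ρ ↦ hle_one z ρ⟩ y ?_
  exact le_ciSup_of_le ⟨1, forall_mem_range.2 fun ρ ↦ hle_one y ρ⟩ ⟨r, hr⟩ le_rfl

lemma ncard_erase_inter_ball_add_one {M : Type*} [MetricSpace M] [DecidableEq M]
    {X : Finset M} {x : M} (hx : x ∈ X) {r : ℝ} (hr : 0 < r) :
    ((X.erase x : Set M) ∩ ball x r).ncard + 1 = ((X : Set M) ∩ ball x r).ncard := by
  rw [Finset.coe_erase, ← inter_sdiff_right_comm]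
  exact ncard_sdiff_singleton_add_one ⟨hx, mem_ball_self hr⟩ (X.finite_toSet.inter_of_left _)

section PuncturedEmpiricalMeasure

lemma finsetSum_dirac_apply {α : Type*} [MeasurableSpace α] (T : Finset α) {S : Set α}
    (hS : MeasurableSet S) : (∑ y ∈ T, Measure.dirac y) S = ((T : Set α) ∩ S).ncard := by
  classical
  rw [Measure.finsetSum_apply]
  simp only [Measure.dirac_apply' _ hS]
  rw [Finset.sum_indicator_eq_sum_filter]
  simp only [Pi.one_apply, Finset.sum_const, nsmul_one]
  rw [← Set.ncard_coe_finset, Finset.coe_filter]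
  rfl

variable {α : Type*} [MeasurableSpace α] [DecidableEq α]

/-- The normalized counting measure `ν_X` of the paper with the atom at `x` removed. -/
noncomputable def puncturedEmpiricalMeasure (X : Finset α) (x : α) : Measure α :=
  ((X.card : ℝ≥0)⁻¹) • ∑ y ∈ X.erase x, Measure.dirac y

instance (X : Finset α) (x : α) : IsFiniteMeasure (puncturedEmpiricalMeasure X x) := by
  unfold puncturedEmpiricalMeasure; infer_instance

variable {X : Finset α} {x : α}

lemma integral_puncturedEmpiricalMeasure [MeasurableSingletonClass α] (f : α → ℝ) :
    ∫ y, f y ∂puncturedEmpiricalMeasure X x = 1 / (X.card : ℝ) * ∑ y ∈ X.erase x, f y := by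
  rw [puncturedEmpiricalMeasure, integral_smul_nnreal_measure,
    integral_finsetSum_measure fun y _ ↦ integrable_dirac enorm_lt_top]
  simp [NNReal.smul_def]

lemma puncturedEmpiricalMeasure_singleton [MeasurableSingletonClass α] :
    puncturedEmpiricalMeasure X x {x} = 0 := by
  simp [puncturedEmpiricalMeasure, Measure.finsetSum_apply]

lemma measureReal_puncturedEmpiricalMeasure {S : Set α} (hS : MeasurableSet S) :
    (puncturedEmpiricalMeasure X x).real S = (((X.erase x : Set α) ∩ S).ncard : ℝ) / X.card := by
  rw [puncturedEmpiricalMeasure, Measure.real, Measure.smul_apply,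
    finsetSum_dirac_apply _ hS, ENNReal.smul_def, smul_eq_mul, ENNReal.toReal_mul]
  simp [div_eq_inv_mul]

end PuncturedEmpiricalMeasure

lemma abs_measureReal_puncturedEmpiricalMeasure_ball_sub_le {M : Type*} [MetricSpace M]
    [MeasurableSpace M] [OpensMeasurableSpace M] [DecidableEq M] (σ : Measure M)
    [IsProbabilityMeasure σ] {X : Finset M} {x : M} {D : ℝ} (hND : 1 / (X.card : ℝ) ≤ D)
    (hdisc : ballDisc σ X ≤ D) (hx : x ∈ X) {r : ℝ} (hr : 0 < r) :
    |(puncturedEmpiricalMeasure X x).real (ball x r) - σ.real (ball x r)| ≤ 2 * D := by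
  have h := (abs_sub_le_ballDisc σ X x hr).trans hdisc
  have : 0 < 1 / (X.card : ℝ) := one_div_pos.2 (by exact_mod_cast X.card_pos.2 ⟨x, hx⟩)
  rw [← ncard_erase_inter_ball_add_one hx hr, Nat.cast_add_one, add_div] at h
  rw [measureReal_puncturedEmpiricalMeasure measurableSet_ball]
  rw [abs_le] at h ⊢
  constructor <;> linarith [h.1, h.2]

lemma abs_inv_card_mul_sum_sub_integral_le {M : Type*} [MetricSpace M] [MeasurableSpace M]
    [BorelSpace M] [DecidableEq M] (σ : Measure M) [IsProbabilityMeasure σ] {d : ℕ}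
    {s Cbot Ct δ D R : ℝ} (hs : 0 < s) (hsd : s < d) (hCbot : 0 < Cbot) (hCt : 0 ≤ Ct)
    (hlow : ∀ y ρ, 0 < ρ → ρ ≤ diam (univ : Set M) → Cbot * ρ ^ d ≤ σ.real (ball y ρ))
    (hup : ∀ y ρ, 0 < ρ → σ.real (ball y ρ) ≤ Ct * ρ ^ d)
    {X : Finset M} (hδ : 0 < δ) (hδM : δ ≤ diam (univ : Set M))
    (hsep : (X : Set M).Pairwise (δ < dist · ·)) (hND : 1 / (X.card : ℝ) ≤ D)
    (hdisc : ballDisc σ X ≤ D) (hR : 0 < R) {x : M} (hx : x ∈ X) :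
    |1 / (X.card : ℝ) * ∑ y ∈ X.erase x, dist x y ^ (-s) - ∫ y, dist x y ^ (-s) ∂σ| ≤
      (Ct / Cbot * (3 / δ) ^ d / X.card + Ct) * (s / (d - s)) * R ^ ((d : ℝ) - s) +
        2 * D * R ^ (-s) := by
  have hd : d ≠ 0 := by rintro rfl; norm_num at hsd; linarith
  have hfar : ∀ y ∈ X.erase x, δ < dist x y := fun y hy ↦
    hsep hx (Finset.mem_of_mem_erase hy) (Finset.ne_of_mem_erase hy).symm
  set A := Ct / Cbot * (3 / δ) ^ d / X.card
  have hA : 0 ≤ A := by positivity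
  have hνle : ∀ r, 0 < r → (puncturedEmpiricalMeasure X x).real (ball x r) ≤ A * r ^ d := by
    intro r hr
    rw [measureReal_puncturedEmpiricalMeasure measurableSet_ball, div_mul_eq_mul_div]
    gcongr
    exact (ncard_inter_ball_le_of_separated σ hCbot hCt hlow hup hδ hδM
      (hsep.mono (Finset.coe_subset.2 (X.erase_subset x))) hfar hr).trans_eq
      (by rw [mul_div_right_comm, mul_pow]; ring)
  rw [← integral_puncturedEmpiricalMeasure]
  refine abs_integral_rpow_neg_dist_sub_le (K := A + Ct) hs hsd (by positivity) hR
    puncturedEmpiricalMeasure_singleton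
    (measure_singleton_eq_zero_of_measureReal_ball_le hd (hup x)) (fun r hr ↦ ?_)
    (fun r hr ↦ ?_)
    fun r hr ↦ abs_measureReal_puncturedEmpiricalMeasure_ball_sub_le σ hND hdisc hx hr
  · rw [Real.rpow_natCast]
    exact (hνle r hr).trans (by gcongr; linarith)
  · rw [Real.rpow_natCast]
    exact (hup x r hr).trans (by gcongr; linarith)

lemma abs_rieszEnergy_sub_le {M : Type*} [MetricSpace M] [DecidableEq M] {s B : ℝ}
    {X : Finset M} (hX : X.Nonempty) (U : M → ℝ)
    (h : ∀ x ∈ X, |1 / (X.card : ℝ) * ∑ y ∈ X.erase x, dist x y ^ (-s) - U x| ≤ B) :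
    |rieszEnergy s X - 1 / (X.card : ℝ) * ∑ x ∈ X, U x| ≤ B := by
  have hN : (0 : ℝ) < X.card := by exact_mod_cast hX.card_pos
  have hsplit : rieszEnergy s X - 1 / (X.card : ℝ) * ∑ x ∈ X, U x =
      1 / (X.card : ℝ) * ∑ x ∈ X, (1 / (X.card : ℝ) * ∑ y ∈ X.erase x, dist x y ^ (-s) - U x) := by
    rw [rieszEnergy, Finset.sum_sub_distrib, ← Finset.mul_sum, mul_sub, ← mul_assoc]
    congr 3
    · ring
    · ext; congr; exact Subsingleton.elim _ _
  calc _ = 1 / (X.card : ℝ) *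
        |∑ x ∈ X, (1 / (X.card : ℝ) * ∑ y ∈ X.erase x, dist x y ^ (-s) - U x)| := by
        rw [hsplit, abs_mul, abs_of_pos (by positivity)]
    _ ≤ 1 / (X.card : ℝ) * (X.card * B) := by
        gcongr
        exact (Finset.abs_sum_le_sum_abs _ _).trans
          ((Finset.sum_le_card_nsmul _ _ _ h).trans_eq (nsmul_eq_mul _ _))
    _ = B := by field_simp

lemma mul_rpow_neg_one_div_pow {γ N : ℝ} (hN : 0 ≤ N) {d : ℕ} (hd : d ≠ 0) :
    (γ * N ^ (-1 / (d : ℝ))) ^ d = γ ^ d / N := by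
  rw [mul_pow, ← Real.rpow_natCast (N ^ _), ← Real.rpow_mul hN, div_mul_cancel₀ _ (by simpa),
    Real.rpow_neg_one, div_eq_mul_inv]

lemma mul_rpow_sub_add_mul_rpow_neg {K γ D d s : ℝ} (hγ : 0 ≤ γ) (hD : 0 < D) (hd : d ≠ 0) :
    K * (γ * D ^ (1 / d)) ^ (d - s) + 2 * D * (γ * D ^ (1 / d)) ^ (-s) =
      (K * γ ^ (d - s) + 2 * γ ^ (-s)) * D ^ (1 - s / d) := by
  have hscale : ∀ t, (γ * D ^ (1 / d)) ^ t = γ ^ t * D ^ (t / d) := fun t ↦ by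
    rw [Real.mul_rpow hγ (by positivity), ← Real.rpow_mul hD.le, one_div_mul_eq_div]
  have hpow : D * D ^ (-s / d) = D ^ (1 - s / d) := by
    rw [sub_eq_add_neg, Real.rpow_add hD, Real.rpow_one, neg_div]
  rw [hscale, hscale, sub_div, div_self hd, ← hpow]
  ring

theorem energy_vs_mean_potential_bound_general
    {M : Type*} [MetricSpace M]
    [MeasurableSpace M] [BorelSpace M]
    (d : ℕ)
    (σ : Measure M) [IsProbabilityMeasure σ]
    -- Regularity hypothesis
    (Cbot Ctop : ℝ) (hCbot : 0 < Cbot)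
    (hreg : ∀ (x : M) (r : ℝ), 0 < r → r ≤ diam (Set.univ : Set M) →
      Cbot * r ^ d ≤ (σ (ball x r)).toReal ∧ (σ (ball x r)).toReal ≤ Ctop * r ^ d)
    (s : ℝ) (hs0 : 0 < s) (hsd : s < d)
    (γ : ℝ) (hγ : 0 < γ) :
    ∃ C > (0 : ℝ), ∃ D0 : ℝ, 0 < D0 ∧ D0 < 1 ∧
      ∀ X : Finset M, X.Nonempty →
        (∀ x ∈ X, ∀ y ∈ X, x ≠ y → dist x y > γ * ((X.card : ℝ)) ^ (-(1 : ℝ) / d)) →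
        ∀ D : ℝ, 1 / (X.card : ℝ) < D → D ≤ D0 →
          γ * D ^ ((1 : ℝ) / d) < diam (Set.univ : Set M) →
          ballDisc σ X ≤ D →
          |rieszEnergy s X -
              (1 / (X.card : ℝ)) * ∑ x ∈ X, ∫ y, dist x y ^ (-s) ∂σ| ≤
            C * D ^ (1 - s / (d : ℝ)) := by
  classical
  set Ct := max Ctop (diam (univ : Set M) ^ d)⁻¹
  have hCt : 0 ≤ Ct := le_max_of_le_right (by have := diam_nonneg (s := (univ : Set M)); positivity)
  set K := Ct / Cbot * (3 / γ) ^ d + Ct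
  have hds : (0 : ℝ) < d - s := by linarith
  refine ⟨K * (s / (d - s)) * γ ^ ((d : ℝ) - s) + 2 * γ ^ (-s), by positivity, 1 / 2,
    by norm_num, by norm_num, ?_⟩
  intro X hX hsep D hND _ hRM hdisc
  have hd : d ≠ 0 := by rintro rfl; norm_num at hsd; linarith
  have hN : (0 : ℝ) < X.card := by exact_mod_cast hX.card_pos
  have hD : 0 < D := (by positivity : (0 : ℝ) < 1 / X.card).trans hND
  set δ := γ * (X.card : ℝ) ^ (-(1 : ℝ) / d)
  have hδR : δ < γ * D ^ ((1 : ℝ) / d) := by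
    refine mul_lt_mul_of_pos_left ?_ hγ
    rw [neg_div, Real.rpow_neg hN.le, ← Real.inv_rpow hN.le]
    exact Real.rpow_lt_rpow (by positivity) (by rwa [← one_div]) (by positivity)
  have hK : Ct / Cbot * (3 / δ) ^ d / X.card + Ct = K := by
    rw [mul_div_assoc, div_pow, mul_rpow_neg_one_div_pow hN.le hd, div_div,
      div_mul_cancel₀ _ hN.ne', ← div_pow]
  refine abs_rieszEnergy_sub_le hX _ fun x hx ↦
    (abs_inv_card_mul_sum_sub_integral_le σ hs0 hsd hCbot hCt
      (fun y ρ h₁ h₂ ↦ (hreg y ρ h₁ h₂).1)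
      (fun y ρ hρ ↦ measureReal_ball_le_max_mul ((by positivity : (0 : ℝ) < _).trans hRM)
        (fun y ρ h₁ h₂ ↦ (hreg y ρ h₁ h₂).2) y hρ)
      (by positivity) (hδR.trans hRM).le (fun y hy z hz hyz ↦ hsep y hy z hz hyz) hND.le hdisc
      (R := γ * D ^ ((1 : ℝ) / d)) (by positivity) hx).trans_eq ?_
  rw [hK, mul_rpow_sub_add_mul_rpow_neg hγ.le hD (by positivity)]

theorem energy_vs_mean_potential_bound
    {M : Type*} [MetricSpace M] [CompactSpace M] [ConnectedSpace M] [Nontrivial M]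
    [MeasurableSpace M] [BorelSpace M]
    (d : ℕ) (hd : 1 ≤ d)
    (σ : Measure M) [IsProbabilityMeasure σ]
    -- Regularity hypothesis
    (Cbot Ctop : ℝ) (hCbot : 0 < Cbot) (hCbotTop : Cbot ≤ Ctop)
    (hreg : ∀ (x : M) (r : ℝ), 0 < r → r ≤ diam (Set.univ : Set M) →
      Cbot * r ^ d ≤ (σ (ball x r)).toReal ∧ (σ (ball x r)).toReal ≤ Ctop * r ^ d)
    (s : ℝ) (hs0 : 0 < s) (hsd : s < d)
    (γ : ℝ) (hγ : 0 < γ) :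
    ∃ C > (0 : ℝ), ∃ D0 : ℝ, 0 < D0 ∧ D0 < 1 ∧
      ∀ X : Finset M, X.Nonempty →
        (∀ x ∈ X, ∀ y ∈ X, x ≠ y → dist x y > γ * ((X.card : ℝ)) ^ (-(1 : ℝ) / d)) →
        ∀ D : ℝ, 1 / (X.card : ℝ) < D → D ≤ D0 →
          γ * D ^ ((1 : ℝ) / d) < diam (Set.univ : Set M) →
          ballDisc σ X ≤ D →
          |rieszEnergy s X -
              (1 / (X.card : ℝ)) * ∑ x ∈ X, ∫ y, dist x y ^ (-s) ∂σ| ≤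
            C * D ^ (1 - s / (d : ℝ)) :=
  energy_vs_mean_potential_bound_general d σ Cbot Ctop hCbot hreg s hs0 hsd γ hγ
end

section
/- Assume the Regularity hypothesis and the Blümlinger density hypothesis. Fix a real number s with 0 < s < d. Then there exist constants C > 0 and D0 ∈ (0, 1) such that for every nonempty finite subset X ⊆ M with N := |X| and every D ∈ (0, D0] with D(X) ≤ D, the quadrature error of the mean Riesz s-potential satisfies |(1/N) Σ_{x ∈ X} U(x) − ∫_M U(x) dσ(x)| ≤ C · D^{(d−s)/(d²+2d−s)}. -/
open MeasureTheory Metric Filter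

/-! Truncate the kernel at height `T`. Upper regularity bounds the superlevel sets
`{y | t < dist x y ^ (-s)}` by balls of measure `≲ t ^ (-d/s)`, so by the layer-cake formula
the potential `U` and its truncation `U_T` differ by `O(T ^ (1 - d/s))` uniformly in `x`, and
this tail contributes at most that much to the quadrature error. For the bounded part, Fubini
reduces the error to comparing, for each `y`, the integrals of `min (dist · y ^ (-s)) T` against
`ν_X` and `σ`. Its superlevel sets are punctured balls, whose `ν_X`- and `σ`-measures differ by
at most `D(X) + 1/N ≤ 2 D(X)` (the atoms of `ν_X` have mass `1/N`, and a tiny ball around one of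
them shows `1/N ≤ D(X)`), so layer cake again bounds this part by `2 D T`. The choice
`T = D ^ (-s/d)` balances the two terms into `O(D ^ (1 - s/d))`, which is stronger than the claim
because `D < 1`.
-/

open Set
open scoped ENNReal Topology

namespace MeasureTheory

variable {α : Type*} [MeasurableSpace α] {μ ν : Measure α} {f : α → ℝ} {T : ℝ}

theorem integral_eq_setIntegral_Ioo_measureReal_lt [IsFiniteMeasure μ] (hf : Measurable f)
    (hf0 : 0 ≤ f) (hfT : ∀ x, f x ≤ T) :
    ∫ x, f x ∂μ = ∫ t in Ioo 0 T, μ.real {x | t < f x} := by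
  have hint : Integrable f μ := .of_bound hf.aestronglyMeasurable T <| .of_forall fun x => by
    rw [Real.norm_of_nonneg (hf0 x)]; exact hfT x
  rw [hint.integral_eq_integral_meas_lt (.of_forall hf0),
    setIntegral_eq_of_subset_of_forall_sdiff_eq_zero measurableSet_Ioi Ioo_subset_Ioi_self]
  rintro t ⟨ht0, htT⟩
  have hempty : {x | t < f x} = ∅ :=
    eq_empty_of_forall_notMem fun x hx => htT ⟨ht0, hx.trans_le (hfT x)⟩
  rw [hempty, measureReal_empty]

theorem integrableOn_measureReal_lt [IsFiniteMeasure μ] (a b : ℝ) :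
    IntegrableOn (fun t => μ.real {x | t < f x}) (Ioo a b) := by
  have hanti : Antitone fun t => μ.real {x | t < f x} := fun _ _ hst =>
    measureReal_mono fun _ hx => hst.trans_lt hx
  exact ((hanti.antitoneOn _).integrableOn_isCompact (μ := volume) isCompact_Icc).mono_set
    Ioo_subset_Icc_self

theorem abs_integral_sub_integral_le_of_abs_measureReal_lt_sub_le [IsFiniteMeasure μ]
    [IsFiniteMeasure ν] (hf : Measurable f) (hf0 : 0 ≤ f) (hfT : ∀ x, f x ≤ T) (hT : 0 ≤ T)
    {ε : ℝ} (hε : ∀ t ∈ Ioo 0 T, |μ.real {x | t < f x} - ν.real {x | t < f x}| ≤ ε) :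
    |∫ x, f x ∂μ - ∫ x, f x ∂ν| ≤ ε * T := by
  rw [integral_eq_setIntegral_Ioo_measureReal_lt hf hf0 hfT,
    integral_eq_setIntegral_Ioo_measureReal_lt hf hf0 hfT,
    ← integral_sub (integrableOn_measureReal_lt 0 T) (integrableOn_measureReal_lt 0 T)]
  simpa [Real.volume_real_Ioo_of_le hT] using
    norm_setIntegral_le_of_norm_le_const
      (f := fun t => μ.real {x | t < f x} - ν.real {x | t < f x})
      (measure_Ioo_lt_top (μ := volume)) hε

section Tail

variable [IsFiniteMeasure μ] {C p : ℝ}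

theorem lintegral_sub_min_le_of_measureReal_lt_le (hf : Measurable f) (hT : 0 < T) (hp : 1 < p)
    (htail : ∀ t, T ≤ t → μ.real {x | t < f x} ≤ C * t ^ (-p)) :
    ∫⁻ x, ENNReal.ofReal (f x - min (f x) T) ∂μ ≤
      ENNReal.ofReal (C * (T ^ (1 - p) / (p - 1))) := by
  have hsuper : ∀ t > 0, {x | t < f x - min (f x) T} = {x | t + T < f x} := fun t ht => by
    ext x
    rcases le_total (f x) T with h | h <;>
      simp only [mem_ofPred_eq, min_eq_left, min_eq_right, h] <;> constructor <;> intro <;> linarith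
  have hmeas : Measurable fun u => μ {x | u < f x} :=
    Antitone.measurable fun _ _ hst => measure_mono fun _ hx => hst.trans_lt hx
  have hpow : IntegrableOn (fun u => C * u ^ (-p)) (Ioi T) :=
    (integrableOn_Ioi_rpow_of_lt (by linarith) hT).const_mul C
  have hnonneg : ∀ u ∈ Ioi T, 0 ≤ C * u ^ (-p) := fun u hu =>
    measureReal_nonneg.trans (htail u (le_of_lt hu))
  rw [lintegral_eq_lintegral_meas_lt μ (.of_forall fun x => sub_nonneg.2 (min_le_left _ _))
    (hf.sub (hf.min measurable_const)).aemeasurable]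
  calc ∫⁻ t in Ioi 0, μ {x | t < f x - min (f x) T}
      = ∫⁻ t in (· + T) ⁻¹' Ioi T, μ {x | t + T < f x} := by
        rw [preimage_add_const_Ioi, sub_self]
        exact setLIntegral_congr_fun measurableSet_Ioi fun t ht => by rw [hsuper t ht]
    _ = ∫⁻ u in Ioi T, μ {x | u < f x} :=
        (measurePreserving_add_right volume T).setLIntegral_comp_preimage measurableSet_Ioi hmeas
    _ ≤ ∫⁻ u in Ioi T, ENNReal.ofReal (C * u ^ (-p)) := setLIntegral_mono' measurableSet_Ioi
        fun u hu => (ENNReal.le_ofReal_iff_toReal_le (measure_ne_top _ _) (hnonneg u hu)).2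
          (htail u (le_of_lt hu))
    _ = ENNReal.ofReal (∫ u in Ioi T, C * u ^ (-p)) :=
        (ofReal_integral_eq_lintegral_ofReal hpow
          ((ae_restrict_iff' measurableSet_Ioi).2 (.of_forall hnonneg))).symm
    _ = ENNReal.ofReal (C * (T ^ (1 - p) / (p - 1))) := by
        rw [integral_const_mul, integral_Ioi_rpow_of_lt (by linarith) hT, neg_div, ← div_neg]
        ring_nf

theorem integrable_min_const (hf : Measurable f) (hf0 : 0 ≤ f) (hT : 0 ≤ T) :
    Integrable (fun x => min (f x) T) μ :=
  .of_bound (hf.min measurable_const).aestronglyMeasurable T <| .of_forall fun x => by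
    rw [Real.norm_of_nonneg (le_min (hf0 x) hT)]; exact min_le_right _ _

theorem integrable_of_measureReal_lt_le (hf : Measurable f) (hf0 : 0 ≤ f) (hT : 0 < T)
    (hp : 1 < p) (htail : ∀ t, T ≤ t → μ.real {x | t < f x} ≤ C * t ^ (-p)) :
    Integrable f μ := by
  have hsub : Integrable (fun x => f x - min (f x) T) μ :=
    ⟨(hf.sub (hf.min measurable_const)).aestronglyMeasurable,
      (hasFiniteIntegral_iff_ofReal (.of_forall fun x => sub_nonneg.2 (min_le_left _ _))).2
        ((lintegral_sub_min_le_of_measureReal_lt_le hf hT hp htail).trans_lt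
          ENNReal.ofReal_lt_top)⟩
  refine (hsub.add (integrable_min_const hf hf0 hT.le)).congr (.of_forall fun x => ?_)
  simp

theorem integral_sub_integral_min_le_of_measureReal_lt_le (hf : Measurable f) (hf0 : 0 ≤ f)
    (hT : 0 < T) (hp : 1 < p) (htail : ∀ t, T ≤ t → μ.real {x | t < f x} ≤ C * t ^ (-p)) :
    ∫ x, f x ∂μ - ∫ x, min (f x) T ∂μ ≤ C * (T ^ (1 - p) / (p - 1)) := by
  have hC : 0 ≤ C := nonneg_of_mul_nonneg_left (measureReal_nonneg.trans (htail T le_rfl))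
    (Real.rpow_pos_of_pos hT _)
  have hbound : 0 ≤ C * (T ^ (1 - p) / (p - 1)) :=
    mul_nonneg hC (div_nonneg (Real.rpow_nonneg hT.le _) (by linarith))
  rw [← integral_sub (integrable_of_measureReal_lt_le hf hf0 hT hp htail)
      (integrable_min_const hf hf0 hT.le),
    integral_eq_lintegral_of_nonneg_ae (.of_forall fun x => sub_nonneg.2 (min_le_left _ _))
      (hf.sub (hf.min measurable_const)).aestronglyMeasurable]
  exact ENNReal.toReal_le_of_le_ofReal hbound
    (lintegral_sub_min_le_of_measureReal_lt_le hf hT hp htail)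

end Tail

theorem abs_integral_sub_integral_le_of_sub_mem_Icc [IsProbabilityMeasure μ]
    [IsProbabilityMeasure ν] {U V : α → ℝ} (hUμ : Integrable U μ) (hUν : Integrable U ν)
    (hVμ : Integrable V μ) (hVν : Integrable V ν) {c : ℝ}
    (hUV : ∀ x, U x - V x ∈ Icc 0 c) :
    |∫ x, U x ∂μ - ∫ x, U x ∂ν| ≤ c + |∫ x, V x ∂μ - ∫ x, V x ∂ν| := by
  have hmem : ∀ (ρ : Measure α) [IsProbabilityMeasure ρ], Integrable U ρ →
      Integrable V ρ → ∫ x, U x ∂ρ - ∫ x, V x ∂ρ ∈ Icc 0 c := fun ρ _ hU hV => by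
    rw [← integral_sub hU hV]
    exact ⟨integral_nonneg fun x => (hUV x).1,
      by simpa using integral_mono (hU.sub hV) (integrable_const c) fun x => (hUV x).2⟩
  obtain ⟨hμ₀, hμ₁⟩ := hmem μ hUμ hVμ
  obtain ⟨hν₀, hν₁⟩ := hmem ν hUν hVν
  obtain ⟨hV₀, hV₁⟩ := abs_le.1 (le_refl |∫ x, V x ∂μ - ∫ x, V x ∂ν|)
  rw [abs_le]
  constructor <;> linarith

theorem abs_integral_integral_sub_le {β : Type*} [MeasurableSpace β] {ρ : Measure β}
    [IsProbabilityMeasure ρ] [IsFiniteMeasure μ] [IsFiniteMeasure ν] {K : α → β → ℝ}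
    (hK : Measurable (Function.uncurry K)) {B : ℝ} (hKB : ∀ x y, |K x y| ≤ B) {ε : ℝ}
    (h : ∀ y, |∫ x, K x y ∂μ - ∫ x, K x y ∂ν| ≤ ε) :
    |∫ x, ∫ y, K x y ∂ρ ∂μ - ∫ x, ∫ y, K x y ∂ρ ∂ν| ≤ ε := by
  have hint : ∀ (m : Measure α) [IsFiniteMeasure m],
      Integrable (Function.uncurry K) (m.prod ρ) :=
    fun m _ => .of_bound hK.aestronglyMeasurable B (.of_forall fun p => hKB p.1 p.2)
  have hμ : Integrable (fun y => ∫ x, K x y ∂μ) ρ := (hint μ).integral_prod_right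
  have hν : Integrable (fun y => ∫ x, K x y ∂ν) ρ := (hint ν).integral_prod_right
  rw [integral_integral_swap (hint μ), integral_integral_swap (hint ν), ← integral_sub hμ hν]
  simpa using norm_integral_le_of_norm_le_const (μ := ρ)
    (.of_forall fun y => (Real.norm_eq_abs _).trans_le (h y))

noncomputable def empiricalMeasure (X : Finset α) : Measure α :=
  (X.card : ℝ≥0∞)⁻¹ • ∑ x ∈ X, Measure.dirac x

section Empirical

variable [MeasurableSingletonClass α] {X : Finset α}

theorem empiricalMeasure_apply (X : Finset α) (S : Set α) :
    empiricalMeasure X S = ((X : Set α) ∩ S).ncard / X.card := by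
  classical
  have hcard : ((X : Set α) ∩ S).ncard = (X.filter (· ∈ S)).card := by
    rw [← ncard_coe_finset, Finset.coe_filter]; rfl
  simp [empiricalMeasure, Measure.dirac_apply, indicator, Finset.sum_boole, hcard,
    ENNReal.div_eq_inv_mul]

theorem empiricalMeasure_real_apply (X : Finset α) (S : Set α) :
    (empiricalMeasure X).real S = ((X : Set α) ∩ S).ncard / X.card := by
  simp [measureReal_def, empiricalMeasure_apply, ENNReal.toReal_div]

theorem isProbabilityMeasure_empiricalMeasure (hX : X.Nonempty) :
    IsProbabilityMeasure (empiricalMeasure X) := by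
  constructor
  rw [empiricalMeasure_apply, inter_univ, ncard_coe_finset,
    ENNReal.div_self (by simpa using hX.ne_empty) (ENNReal.natCast_ne_top _)]

instance (X : Finset α) : IsZeroOrProbabilityMeasure (empiricalMeasure X) := by
  rcases X.eq_empty_or_nonempty with rfl | hX
  · constructor; simp [empiricalMeasure]
  · have := isProbabilityMeasure_empiricalMeasure hX; infer_instance

theorem integrable_empiricalMeasure (X : Finset α) (f : α → ℝ) :
    Integrable f (empiricalMeasure X) := by
  rcases X.eq_empty_or_nonempty with rfl | hX
  · simp [empiricalMeasure]
  · exact (integrable_finsetSum_measure.2 fun x _ => integrable_dirac enorm_lt_top).smul_measure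
      (ENNReal.inv_ne_top.2 (by simpa using hX.ne_empty))

theorem integral_empiricalMeasure (X : Finset α) (f : α → ℝ) :
    ∫ x, f x ∂empiricalMeasure X = (X.card : ℝ)⁻¹ * ∑ x ∈ X, f x := by
  simp [empiricalMeasure, integral_smul_measure,
    integral_finsetSum_measure fun x _ => integrable_dirac enorm_lt_top]

theorem empiricalMeasure_real_singleton_le (X : Finset α) (y : α) :
    (empiricalMeasure X).real {y} ≤ (X.card : ℝ)⁻¹ := by
  rw [empiricalMeasure_real_apply, inv_eq_one_div]
  gcongr
  exact_mod_cast (ncard_le_ncard inter_subset_right (finite_singleton y)).trans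
    (ncard_singleton y).le

end Empirical

end MeasureTheory

section Discrepancy

variable {M : Type*} [MetricSpace M] [MeasurableSpace M] [BorelSpace M] {σ : Measure M}
  [IsProbabilityMeasure σ] {X : Finset M}

theorem abs_empiricalMeasure_ball_sub_le_ballDisc (X : Finset M) (y : M) {r : ℝ} (hr : 0 < r) :
    |(empiricalMeasure X).real (ball y r) - σ.real (ball y r)| ≤ ballDisc σ X := by
  have hle : ∀ y (r : ℝ), |(empiricalMeasure X).real (ball y r) - σ.real (ball y r)| ≤ 1 :=
    fun y r => abs_sub_le_of_nonneg_of_le measureReal_nonneg measureReal_le_one measureReal_nonneg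
      measureReal_le_one
  simp only [empiricalMeasure_real_apply] at hle ⊢
  simp only [measureReal_def] at hle ⊢
  refine le_ciSup_of_le ⟨1, ?_⟩ y (le_ciSup_of_le ⟨1, ?_⟩ ⟨r, hr⟩ le_rfl)
  · rintro _ ⟨y, rfl⟩
    have : Nonempty (Ioi (0 : ℝ)) := ⟨⟨1, by norm_num⟩⟩
    exact ciSup_le fun r => hle y r
  · rintro _ ⟨r, rfl⟩
    exact hle y r

theorem tendsto_measureReal_ball_nhdsGT [NullSingletonClass σ] (x : M) :
    Tendsto (fun r => σ.real (ball x r)) (𝓝[>] 0) (𝓝 0) := by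
  have h := tendsto_measure_thickening_of_isClosed (μ := σ) ⟨1, one_pos, measure_ne_top σ _⟩
    (isClosed_singleton (x := x))
  simp only [thickening_singleton, measure_singleton] at h
  exact (ENNReal.tendsto_toReal ENNReal.zero_ne_top).comp h

theorem inv_card_le_ballDisc [NullSingletonClass σ] (hX : X.Nonempty) :
    (X.card : ℝ)⁻¹ ≤ ballDisc σ X := by
  obtain ⟨x, hx⟩ := hX
  have hlim : Tendsto (fun r => (X.card : ℝ)⁻¹ - σ.real (ball x r)) (𝓝[>] 0)
      (𝓝 (X.card : ℝ)⁻¹) := by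
    simpa using tendsto_const_nhds.sub (tendsto_measureReal_ball_nhdsGT (σ := σ) x)
  refine le_of_tendsto hlim (eventually_nhdsWithin_of_forall fun (r : ℝ) (hr : 0 < r) => ?_)
  have hmem : (1 : ℝ) ≤ ((X : Set M) ∩ ball x r).ncard := by
    exact_mod_cast (ncard_pos (X.finite_toSet.inter_of_left _)).2 ⟨x, hx, mem_ball_self hr⟩
  have hν : (X.card : ℝ)⁻¹ ≤ (empiricalMeasure X).real (ball x r) := by
    rw [empiricalMeasure_real_apply, inv_eq_one_div]
    gcongr
  linarith [le_abs_self ((empiricalMeasure X).real (ball x r) - σ.real (ball x r)),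
    abs_empiricalMeasure_ball_sub_le_ballDisc (σ := σ) X x hr]

end Discrepancy

section RieszKernel

variable {M : Type*} [MetricSpace M] {s T : ℝ}

/-- Since `0 ^ (-s) = 0` in Lean, the centre is not in the superlevel set. -/
theorem setOf_lt_rpow_neg_dist {t : ℝ} (hs : 0 < s) (ht : 0 < t) (y : M) :
    {x | t < dist x y ^ (-s)} = ball y (t ^ (-s)⁻¹) \ {y} := by
  ext x
  rcases eq_or_ne x y with rfl | hxy
  · simp [Real.zero_rpow (neg_ne_zero.2 hs.ne'), ht.le]
  · simp only [mem_ofPred_eq, Set.mem_sdiff, mem_ball, mem_singleton_iff, hxy, not_false_eq_true,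
      and_true]
    exact (Real.lt_rpow_inv_iff_of_neg (dist_pos.2 hxy) ht (neg_neg_iff_pos.2 hs)).symm

theorem setOf_lt_min_rpow_neg_dist {t : ℝ} (hs : 0 < s) (ht : 0 < t) (htT : t < T) (y : M) :
    {x | t < min (dist x y ^ (-s)) T} = ball y (t ^ (-s)⁻¹) \ {y} := by
  simp only [lt_min_iff, htT, and_true, setOf_lt_rpow_neg_dist hs ht]

theorem abs_min_rpow_neg_dist_le (hT : 0 ≤ T) (x y : M) : |min (dist x y ^ (-s)) T| ≤ T := by
  rw [abs_of_nonneg (le_min (Real.rpow_nonneg dist_nonneg _) hT)]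
  exact min_le_right _ _

variable [MeasurableSpace M]

noncomputable def rieszPotential (σ : Measure M) (s : ℝ) (x : M) : ℝ :=
  ∫ y, dist x y ^ (-s) ∂σ

noncomputable def truncatedRieszPotential (σ : Measure M) (s T : ℝ) (x : M) : ℝ :=
  ∫ y, min (dist x y ^ (-s)) T ∂σ

theorem abs_truncatedRieszPotential_le {σ : Measure M} [IsProbabilityMeasure σ] (hT : 0 ≤ T)
    (x : M) :
    |truncatedRieszPotential σ s T x| ≤ T := by
  simpa [truncatedRieszPotential] using norm_integral_le_of_norm_le_const (μ := σ)
    (.of_forall fun y => (Real.norm_eq_abs _).trans_le (abs_min_rpow_neg_dist_le hT x y))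

variable [BorelSpace M]

theorem abs_integral_min_rpow_neg_dist_sub_le {μ ν : Measure M} [IsFiniteMeasure μ]
    [IsFiniteMeasure ν] [NullSingletonClass ν] {ε δ : ℝ} (hs : 0 < s) (hT : 0 ≤ T) (y : M)
    (hball : ∀ r, 0 < r → |μ.real (ball y r) - ν.real (ball y r)| ≤ ε)
    (hatom : μ.real {y} ≤ δ) :
    |∫ x, min (dist x y ^ (-s)) T ∂μ - ∫ x, min (dist x y ^ (-s)) T ∂ν| ≤
      (ε + δ) * T := by
  refine abs_integral_sub_integral_le_of_abs_measureReal_lt_sub_le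
    ((by fun_prop : Measurable fun x => dist x y ^ (-s)).min measurable_const)
    (fun x => le_min (Real.rpow_nonneg dist_nonneg _) hT) (fun x => min_le_right _ _) hT
    fun t ht => ?_
  have hr : 0 < t ^ (-s)⁻¹ := Real.rpow_pos_of_pos ht.1 _
  have hy : {y} ⊆ ball y (t ^ (-s)⁻¹) := singleton_subset_iff.2 (mem_ball_self hr)
  rw [setOf_lt_min_rpow_neg_dist hs ht.1 ht.2, measureReal_sdiff hy (measurableSet_singleton y),
    measureReal_sdiff hy (measurableSet_singleton y), measureReal_def ν {y}, measure_singleton,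
    ENNReal.toReal_zero]
  have := abs_le.1 (hball _ hr)
  rw [abs_le]
  constructor <;> linarith [measureReal_nonneg (μ := μ) (s := {y})]

theorem measurable_rpow_neg_dist [SecondCountableTopology M] (s : ℝ) :
    Measurable (Function.uncurry fun x y : M => dist x y ^ (-s)) := by
  fun_prop

theorem integrable_truncatedRieszPotential [SecondCountableTopology M] {σ : Measure M}
    [IsProbabilityMeasure σ] (hT : 0 ≤ T) :
    Integrable (truncatedRieszPotential σ s T) σ :=
  .of_bound (((measurable_rpow_neg_dist s).min measurable_const).stronglyMeasurable
    |>.integral_prod_right').aestronglyMeasurable T (.of_forall (abs_truncatedRieszPotential_le hT))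

end RieszKernel

def UpperRegular {M : Type*} [MetricSpace M] [MeasurableSpace M] (σ : Measure M) (C R d : ℝ) :
    Prop :=
  ∀ x r, 0 < r → r ≤ R → σ.real (ball x r) ≤ C * r ^ d

namespace UpperRegular

variable {M : Type*} [MetricSpace M] [MeasurableSpace M] {σ : Measure M} {C R d s T : ℝ}

section FiniteMeasure

variable [IsFiniteMeasure σ]

theorem nullSingletonClass (h : UpperRegular σ C R d) (hR : 0 < R) (hd : 0 < d) :
    NullSingletonClass σ := by
  refine ⟨fun x => ?_⟩
  have hlim : Tendsto (fun r : ℝ => C * r ^ d) (𝓝[>] 0) (𝓝 0) := by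
    simpa [Real.zero_rpow hd.ne'] using
      ((Real.continuousAt_rpow_const 0 d (Or.inr hd.le)).tendsto.const_mul C).mono_left
        nhdsWithin_le_nhds
  have hle : ∀ᶠ r in 𝓝[>] (0 : ℝ), σ.real {x} ≤ C * r ^ d := by
    filter_upwards [Ioo_mem_nhdsGT hR] with r hr
    exact (measureReal_mono (singleton_subset_iff.2 (mem_ball_self hr.1))).trans
      (h x r hr.1 hr.2.le)
  exact (measureReal_eq_zero_iff).1 (le_antisymm (ge_of_tendsto hlim hle) measureReal_nonneg)

theorem measureReal_lt_rpow_neg_dist_le (h : UpperRegular σ C R d) (hR : 0 < R) (hs : 0 < s)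
    (x : M) {t : ℝ} (ht : R ^ (-s) ≤ t) :
    σ.real {y | t < dist x y ^ (-s)} ≤ C * t ^ (-(d / s)) := by
  have ht0 : 0 < t := (Real.rpow_pos_of_pos hR _).trans_le ht
  have hr : t ^ (-s)⁻¹ ≤ R := (Real.rpow_inv_le_iff_of_neg ht0 hR (neg_neg_iff_pos.2 hs)).2 ht
  have hsub : {y | t < dist x y ^ (-s)} ⊆ ball x (t ^ (-s)⁻¹) := by
    simp_rw [dist_comm x, setOf_lt_rpow_neg_dist hs ht0]
    exact sdiff_subset
  calc σ.real {y | t < dist x y ^ (-s)}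
      ≤ σ.real (ball x (t ^ (-s)⁻¹)) := measureReal_mono hsub
    _ ≤ C * (t ^ (-s)⁻¹) ^ d := h x _ (Real.rpow_pos_of_pos ht0 _) hr
    _ = C * t ^ (-(d / s)) := by rw [← Real.rpow_mul ht0.le]; congr 2; field_simp

variable [BorelSpace M]

theorem integrable_rpow_neg_dist (h : UpperRegular σ C R d) (hR : 0 < R) (hs : 0 < s)
    (hsd : s < d) (x : M) : Integrable (fun y => dist x y ^ (-s)) σ :=
  integrable_of_measureReal_lt_le (by fun_prop) (fun _ => Real.rpow_nonneg dist_nonneg _)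
    (Real.rpow_pos_of_pos hR _) ((one_lt_div hs).2 hsd)
    fun _ ht => h.measureReal_lt_rpow_neg_dist_le hR hs x ht

theorem rieszPotential_sub_truncatedRieszPotential_mem_Icc (h : UpperRegular σ C R d)
    (hR : 0 < R) (hs : 0 < s) (hsd : s < d) (hT : R ^ (-s) ≤ T) (x : M) :
    rieszPotential σ s x - truncatedRieszPotential σ s T x ∈
      Icc 0 (C * (T ^ (1 - d / s) / (d / s - 1))) := by
  have hT0 : 0 < T := (Real.rpow_pos_of_pos hR _).trans_le hT
  have hf : Measurable fun y => dist x y ^ (-s) := by fun_prop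
  have hf0 : 0 ≤ fun y => dist x y ^ (-s) := fun _ => Real.rpow_nonneg dist_nonneg _
  refine ⟨sub_nonneg.2 (integral_mono (integrable_min_const hf hf0 hT0.le)
    (h.integrable_rpow_neg_dist hR hs hsd x) fun _ => min_le_left _ _), ?_⟩
  exact integral_sub_integral_min_le_of_measureReal_lt_le hf hf0 hT0 ((one_lt_div hs).2 hsd)
    fun _ ht => h.measureReal_lt_rpow_neg_dist_le hR hs x (hT.trans ht)

end FiniteMeasure

variable [BorelSpace M] [SecondCountableTopology M] [IsProbabilityMeasure σ]

theorem integrable_rieszPotential (h : UpperRegular σ C R d) (hR : 0 < R) (hs : 0 < s)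
    (hsd : s < d) : Integrable (rieszPotential σ s) σ := by
  have hT : 0 ≤ R ^ (-s) := (Real.rpow_pos_of_pos hR _).le
  have hm : StronglyMeasurable (rieszPotential σ s) :=
    (measurable_rpow_neg_dist s).stronglyMeasurable.integral_prod_right'
  refine .of_bound hm.aestronglyMeasurable
    (R ^ (-s) + C * ((R ^ (-s)) ^ (1 - d / s) / (d / s - 1))) (.of_forall fun x => ?_)
  have hUV := h.rieszPotential_sub_truncatedRieszPotential_mem_Icc hR hs hsd le_rfl x
  have hV := abs_le.1 (abs_truncatedRieszPotential_le (σ := σ) (s := s) hT x)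
  rw [Real.norm_eq_abs, abs_le]
  constructor <;> linarith [hUV.1, hUV.2]

theorem abs_integral_rieszPotential_sub_le (h : UpperRegular σ C R d) (hR : 0 < R) (hs : 0 < s)
    (hsd : s < d) {X : Finset M} (hX : X.Nonempty) {D : ℝ} (hXD : ballDisc σ X ≤ D)
    (hT : R ^ (-s) ≤ T) :
    |∫ x, rieszPotential σ s x ∂empiricalMeasure X - ∫ x, rieszPotential σ s x ∂σ| ≤
      C * (T ^ (1 - d / s) / (d / s - 1)) + 2 * D * T := by
  have := h.nullSingletonClass hR (hs.trans hsd)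
  have := isProbabilityMeasure_empiricalMeasure hX
  have hT0 : 0 ≤ T := ((Real.rpow_pos_of_pos hR _).trans_le hT).le
  refine (abs_integral_sub_integral_le_of_sub_mem_Icc (integrable_empiricalMeasure X _)
    (h.integrable_rieszPotential hR hs hsd) (integrable_empiricalMeasure X _)
    (integrable_truncatedRieszPotential hT0)
    (h.rieszPotential_sub_truncatedRieszPotential_mem_Icc hR hs hsd hT)).trans
    (add_le_add le_rfl ?_)
  refine abs_integral_integral_sub_le ((measurable_rpow_neg_dist s).min measurable_const)
    (abs_min_rpow_neg_dist_le hT0) fun y => ?_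
  calc _ ≤ (D + D) * T := abs_integral_min_rpow_neg_dist_sub_le hs hT0 y
        (fun r hr => (abs_empiricalMeasure_ball_sub_le_ballDisc X y hr).trans hXD)
        ((empiricalMeasure_real_singleton_le X y).trans ((inv_card_le_ballDisc hX).trans hXD))
    _ = 2 * D * T := by ring

theorem abs_integral_rieszPotential_sub_le_rpow (h : UpperRegular σ C R d) (hR : 0 < R)
    (hs : 0 < s) (hsd : s < d) {X : Finset M} (hX : X.Nonempty) {D : ℝ} (hD : 0 < D)
    (hDR : D ≤ R ^ d) (hXD : ballDisc σ X ≤ D) :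
    |∫ x, rieszPotential σ s x ∂empiricalMeasure X - ∫ x, rieszPotential σ s x ∂σ| ≤
      (C / (d / s - 1) + 2) * D ^ (1 - s / d) := by
  have hd : 0 < d := hs.trans hsd
  have hT : R ^ (-s) ≤ D ^ (-s / d) := by
    calc R ^ (-s) = (R ^ d) ^ (-s / d) := by
          rw [← Real.rpow_mul hR.le, mul_div_cancel₀ _ hd.ne']
      _ ≤ D ^ (-s / d) :=
        Real.rpow_le_rpow_of_nonpos hD hDR (div_nonpos_of_nonpos_of_nonneg (by linarith) hd.le)
  have hpow : (D ^ (-s / d)) ^ (1 - d / s) = D ^ (1 - s / d) := by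
    rw [← Real.rpow_mul hD.le]; congr 1; field_simp; ring
  have hmul : D * D ^ (-s / d) = D ^ (1 - s / d) := by
    rw [show 1 - s / d = 1 + -s / d by ring, Real.rpow_add hD, Real.rpow_one]
  calc _ ≤ C * ((D ^ (-s / d)) ^ (1 - d / s) / (d / s - 1)) + 2 * D * D ^ (-s / d) :=
        h.abs_integral_rieszPotential_sub_le hR hs hsd hX hXD hT
    _ = (C / (d / s - 1) + 2) * D ^ (1 - s / d) := by rw [hpow, mul_assoc 2, hmul]; ring

end UpperRegular

theorem quadrature_error_mean_potential_general
    {M : Type*} [MetricSpace M] [CompactSpace M] [Nontrivial M]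
    [MeasurableSpace M] [BorelSpace M]
    (d : ℕ)
    (σ : Measure M) [IsProbabilityMeasure σ]
    -- Regularity hypothesis
    (Cbot Ctop : ℝ)
    (hreg : ∀ (x : M) (r : ℝ), 0 < r → r ≤ diam (Set.univ : Set M) →
      Cbot * r ^ d ≤ (σ (ball x r)).toReal ∧ (σ (ball x r)).toReal ≤ Ctop * r ^ d)
    (s : ℝ) (hs0 : 0 < s) (hsd : s < d) :
    ∃ C > (0 : ℝ), ∃ D0 : ℝ, 0 < D0 ∧ D0 < 1 ∧
      ∀ X : Finset M, X.Nonempty → ∀ D : ℝ, 0 < D → D ≤ D0 → ballDisc σ X ≤ D →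
        |(1 / (X.card : ℝ)) * ∑ x ∈ X, (∫ y, dist x y ^ (-s) ∂σ) -
            ∫ x, (∫ y, dist x y ^ (-s) ∂σ) ∂σ| ≤
          C * D ^ (((d : ℝ) - s) / ((d : ℝ) ^ 2 + 2 * d - s)) := by
  obtain ⟨x₀, x₁, hx⟩ := exists_pair_ne M
  set Δ := diam (univ : Set M)
  have hΔ : 0 < Δ :=
    (dist_pos.2 hx).trans_le (dist_le_diam_of_mem isCompact_univ.isBounded trivial trivial)
  have hup : UpperRegular σ Ctop Δ d := fun x r hr hrΔ => by
    simpa only [Real.rpow_natCast, measureReal_def] using (hreg x r hr hrΔ).2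
  have hCtop : 0 ≤ Ctop := nonneg_of_mul_nonneg_left
    (measureReal_nonneg.trans (hup x₀ Δ hΔ le_rfl)) (Real.rpow_pos_of_pos hΔ _)
  have hd : 0 < (d : ℝ) := hs0.trans hsd
  have hds : 0 < (d : ℝ) / s - 1 := by rw [sub_pos, one_lt_div hs0]; exact hsd
  refine ⟨Ctop / (d / s - 1) + 2, by positivity, min (1 / 2) (Δ ^ (d : ℝ)), by positivity,
    (min_le_left _ _).trans_lt (by norm_num), fun X hX D hD hDD0 hXD => ?_⟩
  have hD1 : D ≤ 1 := hDD0.trans ((min_le_left _ _).trans (by norm_num))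
  have hexp : ((d : ℝ) - s) / ((d : ℝ) ^ 2 + 2 * d - s) ≤ 1 - s / d := by
    rw [one_sub_div hd.ne']
    exact div_le_div_of_nonneg_left (by linarith) hd (by nlinarith)
  rw [one_div, ← integral_empiricalMeasure]
  exact (hup.abs_integral_rieszPotential_sub_le_rpow hΔ hs0 hsd hX hD
    (hDD0.trans (min_le_right _ _)) hXD).trans (mul_le_mul_of_nonneg_left
      (Real.rpow_le_rpow_of_exponent_ge hD hD1 hexp) (by positivity))

theorem quadrature_error_mean_potential
    {M : Type*} [MetricSpace M] [CompactSpace M] [ConnectedSpace M] [Nontrivial M]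
    [MeasurableSpace M] [BorelSpace M]
    (d : ℕ) (hd : 1 ≤ d)
    (σ : Measure M) [IsProbabilityMeasure σ]
    -- Regularity hypothesis
    (Cbot Ctop : ℝ) (hCbot : 0 < Cbot) (hCbotTop : Cbot ≤ Ctop)
    (hreg : ∀ (x : M) (r : ℝ), 0 < r → r ≤ diam (Set.univ : Set M) →
      Cbot * r ^ d ≤ (σ (ball x r)).toReal ∧ (σ (ball x r)).toReal ≤ Ctop * r ^ d)
    -- Blümlinger density hypothesis
    (R0 C0 κ : ℝ) (hR0 : 0 < R0) (hC0 : 0 < C0) (hκ : 0 < κ)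
    (hblum : ∀ (x : M) (r : ℝ), 0 < r → r < R0 →
      |(σ (ball x r)).toReal - κ * r ^ d| ≤ C0 * κ * r ^ (d + 2))
    (s : ℝ) (hs0 : 0 < s) (hsd : s < d) :
    ∃ C > (0 : ℝ), ∃ D0 : ℝ, 0 < D0 ∧ D0 < 1 ∧
      ∀ X : Finset M, X.Nonempty → ∀ D : ℝ, 0 < D → D ≤ D0 → ballDisc σ X ≤ D →
        |(1 / (X.card : ℝ)) * ∑ x ∈ X, (∫ y, dist x y ^ (-s) ∂σ) -
            ∫ x, (∫ y, dist x y ^ (-s) ∂σ) ∂σ| ≤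
          C * D ^ (((d : ℝ) - s) / ((d : ℝ) ^ 2 + 2 * d - s)) :=
  quadrature_error_mean_potential_general d σ Cbot Ctop hreg s hs0 hsd
end
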